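/- Let n ≥ 1, λ > 0, ω ∈ ℝ^n, T ∈ ℝ, and ρ, σ, K > 0. Let Λ = {s ∈ ℂ : Re s ≤ T, |Im s| ≤ ρ} and let v : Λ × T^n_σ → ℂ be continuous, holomorphic in the interior, 2π-periodic in each component of φ, and satisfy |v(s,φ)| ≤ K e^{Re s} on Λ × T^n_σ. Then the integral u(s,φ) = ∫_{−∞}^0 v(s + λt, φ + ωt) dt converges absolutely for every (s,φ) ∈ Λ × T^n_σ, defines a function holomorphic in the interior of Λ × T^n_σ which satisfies λ ∂u/∂s + D_ω u = v there, and |u(s,φ)| ≤ λ^{−1} K e^{Re s} on Λ × T^n_σ. -/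

import Mathlib

/-!
Along each backward characteristic `t ↦ p + t d`, `t ≤ 0`, the integrand is dominated by
`K e^{Re s} e^{λ t}`, which gives absolute convergence and the bound `λ⁻¹ K e^{Re s}`.
Holomorphy comes from differentiating under the integral sign: by Cauchy's estimate on balls of a
fixed radius translated along the characteristics, `Dv` obeys an exponential bound of the same
kind. Finally `u (p + τ d) = ∫_{-∞}^τ v (p + t d) dt`, so differentiating in `τ` at `0` gives
`Du(p) d = v(p)`, which is `λ ∂u/∂s + D_ω u = v` for `d = (λ, ω)`.
-/

open Complex MeasureTheory
open scoped BigOperators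

noncomputable section

/-- The complex strip `T^n_σ = {z ∈ ℂ^n : |Im z_j| ≤ σ}`. -/
def TStrip (n : ℕ) (σ : ℝ) : Set (Fin n → ℂ) := {z | ∀ j, |(z j).im| ≤ σ}

/-- The semi-infinite strip `Λ = {s ∈ ℂ : Re s ≤ T, |Im s| ≤ ρ}`. -/
def SemiStrip (T ρ : ℝ) : Set ℂ := {s | s.re ≤ T ∧ |s.im| ≤ ρ}

open Set Metric Filter Topology

theorem norm_fderiv_le_of_forall_mem_ball_norm_le {E F : Type*} [NormedAddCommGroup E]
    [NormedSpace ℂ E] [NormedAddCommGroup F] [NormedSpace ℂ F] {f : E → F} {c : E} {r M : ℝ}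
    (hr : 0 < r) (hd : DifferentiableOn ℂ f (ball c r)) (hM : ∀ x ∈ ball c r, ‖f x‖ ≤ M) :
    ‖fderiv ℂ f c‖ ≤ 2 * M / r := by
  refine norm_fderiv_le_div_of_mapsTo_ball hd (fun x hx => ?_) hr
  rw [mem_closedBall, dist_eq_norm, two_mul]
  exact (norm_sub_le _ _).trans (add_le_add (hM x hx) (hM c (mem_ball_self hr)))

theorem hasDerivAt_integral_Iic {F : Type*} [NormedAddCommGroup F] [NormedSpace ℝ F]
    [CompleteSpace F] {h : ℝ → F} {a b : ℝ} (hab : a < b) (hint : IntegrableOn h (Iic b))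
    (hcont : ContinuousAt h a) :
    HasDerivAt (fun τ => ∫ t in Iic τ, h t) (h a) a := by
  have hsplit : ∀ τ ∈ Iio b, ∫ t in Iic τ, h t = (∫ t in Iic a, h t) + ∫ t in a..τ, h t :=
    fun τ hτ => eq_add_of_sub_eq' (intervalIntegral.integral_Iic_sub_Iic
      (hint.mono_set (Iic_subset_Iic.2 hab.le)) (hint.mono_set (Iic_subset_Iic.2 hτ.le)))
  refine HasDerivAt.congr_of_eventuallyEq ?_ (eventually_of_mem (Iio_mem_nhds hab) hsplit)
  refine (intervalIntegral.integral_hasDerivAt_right ?_ ?_ hcont).const_add _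
  · exact intervalIntegrable_iff.2 (by simp)
  · exact ⟨Iio b, Iio_mem_nhds hab, (hint.mono_set Iio_subset_Iic_self).aestronglyMeasurable⟩

theorem re_fst_le_add_dist {E : Type*} [NormedAddCommGroup E] (p q : ℂ × E) :
    p.1.re ≤ q.1.re + dist p q := by
  have h : (p.1 - q.1).re ≤ ‖p - q‖ := (re_le_norm _).trans (norm_fst_le (p - q))
  rw [sub_re, ← dist_eq_norm] at h
  linarith

section RayIntegral

variable {E : Type*} [NormedAddCommGroup E] [NormedSpace ℂ E]

def rayIntegral (v : ℂ × E → ℂ) (d p : ℂ × E) : ℂ := ∫ t in Iic (0 : ℝ), v (p + t • d)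

def BackwardInvariant (S : Set (ℂ × E)) (d : ℂ × E) : Prop :=
  ∀ p ∈ S, ∀ t : ℝ, t ≤ 0 → p + t • d ∈ S

variable {S : Set (ℂ × E)} {v : ℂ × E → ℂ} {d : ℂ × E} {K : ℝ}

theorem rayIntegral_add_smul (v : ℂ × E → ℂ) (d p : ℂ × E) (τ : ℝ) :
    rayIntegral v d (p + τ • d) = ∫ t in Iic τ, v (p + t • d) := by
  have hτ := (measurePreserving_add_right volume τ).setIntegral_preimage_emb
    (measurableEmbedding_addRight τ) (fun t => v (p + t • d)) (Iic τ)
  rw [preimage_add_const_Iic, sub_self] at hτ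
  rw [rayIntegral, ← hτ]
  congr 1 with t
  rw [add_smul]
  abel_nf

theorem ball_add_smul_subset (hS : BackwardInvariant S d) {p : ℂ × E} {r t : ℝ}
    (hball : ball p r ⊆ S) (ht : t ≤ 0) : ball (p + t • d) r ⊆ S := by
  intro y hy
  have : y - t • d ∈ ball p r := by
    rwa [mem_ball, dist_sub_eq_dist_add_left]
  simpa using hS _ (hball this) t ht

theorem norm_apply_add_smul_le (hS : BackwardInvariant S d)
    (hbd : ∀ p ∈ S, ‖v p‖ ≤ K * Real.exp p.1.re) {p : ℂ × E} (hp : p ∈ S) {t : ℝ} (ht : t ≤ 0) :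
    ‖v (p + t • d)‖ ≤ K * Real.exp p.1.re * Real.exp (d.1.re * t) := by
  calc ‖v (p + t • d)‖ ≤ K * Real.exp (p + t • d).1.re := hbd _ (hS p hp t ht)
    _ = K * Real.exp p.1.re * Real.exp (d.1.re * t) := by
      simp only [Prod.fst_add, Prod.smul_fst, add_re, smul_re, smul_eq_mul, Real.exp_add]
      ring_nf

theorem integrableOn_apply_add_smul (hS : BackwardInvariant S d)
    (hd : 0 < d.1.re) (hvc : ContinuousOn v S) (hbd : ∀ p ∈ S, ‖v p‖ ≤ K * Real.exp p.1.re)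
    {p : ℂ × E} (hp : p ∈ S) :
    IntegrableOn (fun t : ℝ => v (p + t • d)) (Iic 0) := by
  refine Integrable.mono' ((integrableOn_exp_mul_Iic hd 0).const_mul (K * Real.exp p.1.re))
    ?_ ((ae_restrict_mem measurableSet_Iic).mono fun t ht => norm_apply_add_smul_le hS hbd hp ht)
  exact (hvc.comp (by fun_prop) (hS p hp)).aestronglyMeasurable measurableSet_Iic

theorem norm_rayIntegral_le (hS : BackwardInvariant S d)
    (hd : 0 < d.1.re) (hbd : ∀ p ∈ S, ‖v p‖ ≤ K * Real.exp p.1.re) {p : ℂ × E} (hp : p ∈ S) :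
    ‖rayIntegral v d p‖ ≤ (d.1.re)⁻¹ * K * Real.exp p.1.re := by
  calc ‖rayIntegral v d p‖
      ≤ ∫ t in Iic (0 : ℝ), K * Real.exp p.1.re * Real.exp (d.1.re * t) :=
        norm_integral_le_of_norm_le ((integrableOn_exp_mul_Iic hd 0).const_mul _)
          ((ae_restrict_mem measurableSet_Iic).mono fun t ht => norm_apply_add_smul_le hS hbd hp ht)
    _ = (d.1.re)⁻¹ * K * Real.exp p.1.re := by
        rw [integral_const_mul, integral_exp_mul_Iic hd, mul_zero, Real.exp_zero]
        field_simp

theorem hasFDerivAt_rayIntegral [FiniteDimensional ℂ E]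
    (hS : BackwardInvariant S d) (hd : 0 < d.1.re) (hvc : ContinuousOn v S)
    (hvd : DifferentiableOn ℂ v (interior S)) (hbd : ∀ p ∈ S, ‖v p‖ ≤ K * Real.exp p.1.re)
    {p₀ : ℂ × E} (hp₀ : p₀ ∈ interior S) :
    HasFDerivAt (rayIntegral v d) (∫ t in Iic (0 : ℝ), fderiv ℂ v (p₀ + t • d)) p₀ := by
  obtain ⟨ε, hε, hball⟩ : ∃ ε > 0, ball p₀ (2 * ε) ⊆ S := by
    obtain ⟨r, hr, hrS⟩ := isOpen_iff.mp isOpen_interior p₀ hp₀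
    refine ⟨r / 2, by positivity, ?_⟩
    rw [mul_div_cancel₀ _ two_ne_zero]
    exact hrS.trans interior_subset
  have hK : 0 ≤ K := nonneg_of_mul_nonneg_left
    ((norm_nonneg _).trans (hbd p₀ (interior_subset hp₀))) (Real.exp_pos _)
  have hshift : ∀ t : ℝ, t ≤ 0 → ball (p₀ + t • d) (2 * ε) ⊆ interior S := fun t ht =>
    isOpen_ball.subset_interior_iff.2 (ball_add_smul_subset hS hball ht)
  have hnear : ∀ t : ℝ, ∀ x ∈ ball p₀ ε, ball (x + t • d) ε ⊆ ball (p₀ + t • d) (2 * ε) :=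
    fun t x hx => ball_subset_ball' (by rw [dist_add_right]; linarith [mem_ball.1 hx])
  have h_diff : ∀ t : ℝ, t ≤ 0 → ∀ x ∈ ball p₀ ε,
      HasFDerivAt (fun y => v (y + t • d)) (fderiv ℂ v (x + t • d)) x := fun t ht x hx =>
    ((hvd.differentiableAt (isOpen_interior.mem_nhds (hshift t ht (hnear t x hx
      (mem_ball_self hε))))).hasFDerivAt.comp x ((hasFDerivAt_id x).add_const (t • d)))
  have h_bound : ∀ t : ℝ, t ≤ 0 → ∀ x ∈ ball p₀ ε, ‖fderiv ℂ v (x + t • d)‖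
      ≤ 2 * (K * Real.exp (p₀.1.re + 2 * ε)) / ε * Real.exp (d.1.re * t) := by
    intro t ht x hx
    have hM : ∀ y ∈ ball (x + t • d) ε,
        ‖v y‖ ≤ K * Real.exp (p₀.1.re + 2 * ε) * Real.exp (d.1.re * t) := by
      intro y hy
      have hy₀ := hnear t x hx hy
      have hre : y.1.re ≤ p₀.1.re + 2 * ε + d.1.re * t := by
        have := re_fst_le_add_dist y (p₀ + t • d)
        simp only [Prod.fst_add, Prod.smul_fst, add_re, smul_re, smul_eq_mul] at this
        linarith [mem_ball.1 hy₀]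
      calc ‖v y‖ ≤ K * Real.exp y.1.re := hbd y (interior_subset (hshift t ht hy₀))
        _ ≤ K * Real.exp (p₀.1.re + 2 * ε + d.1.re * t) := by gcongr
        _ = _ := by rw [Real.exp_add, mul_assoc]
    calc ‖fderiv ℂ v (x + t • d)‖
        ≤ 2 * (K * Real.exp (p₀.1.re + 2 * ε) * Real.exp (d.1.re * t)) / ε :=
          norm_fderiv_le_of_forall_mem_ball_norm_le hε
            (hvd.mono ((hnear t x hx).trans (hshift t ht))) hM
      _ = _ := by ring
  have hmem : ∀ x ∈ ball p₀ ε, x ∈ S := fun x hx => hball (ball_subset_ball (by linarith) hx)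
  refine hasFDerivAt_integral_of_dominated_of_fderiv_le (μ := volume.restrict (Iic 0))
    (F := fun x t => v (x + t • d)) (ball_mem_nhds p₀ hε) ?_
    (integrableOn_apply_add_smul hS hd hvc hbd (hmem p₀ (mem_ball_self hε))) ?_
    ((ae_restrict_mem measurableSet_Iic).mono fun t ht => h_bound t ht)
    ((integrableOn_exp_mul_Iic hd 0).const_mul _)
    ((ae_restrict_mem measurableSet_Iic).mono fun t ht => h_diff t ht)
  · exact eventually_of_mem (ball_mem_nhds p₀ hε) fun x hx =>
      (integrableOn_apply_add_smul hS hd hvc hbd (hmem x hx)).aestronglyMeasurable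
  · borelize (ℂ × E) ((ℂ × E) →L[ℂ] ℂ)
    have hline : Continuous fun t : ℝ => p₀ + t • d := by fun_prop
    exact ((measurable_fderiv ℂ v).comp hline.measurable).aestronglyMeasurable

theorem fderiv_rayIntegral_apply_self [FiniteDimensional ℂ E]
    (hS : BackwardInvariant S d) (hd : 0 < d.1.re) (hvc : ContinuousOn v S)
    (hvd : DifferentiableOn ℂ v (interior S)) (hbd : ∀ p ∈ S, ‖v p‖ ≤ K * Real.exp p.1.re)
    {p : ℂ × E} (hp : p ∈ interior S) :
    fderiv ℂ (rayIntegral v d) p d = v p := by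
  have hline : Continuous fun τ : ℝ => p + τ • d := by fun_prop
  obtain ⟨b, hb, hbS⟩ : ∃ b > (0 : ℝ), ∀ τ ∈ Icc 0 b, p + τ • d ∈ S := by
    have : (fun τ : ℝ => p + τ • d) ⁻¹' interior S ∈ 𝓝 0 :=
      hline.continuousAt.preimage_mem_nhds (by simpa using isOpen_interior.mem_nhds hp)
    obtain ⟨l, u, ⟨hl, hu⟩, hlu⟩ := mem_nhds_iff_exists_Ioo_subset.1 this
    exact ⟨u / 2, by positivity, fun τ hτ =>
      interior_subset (hlu ⟨by linarith [hτ.1], by linarith [hτ.2]⟩)⟩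
  have hint : IntegrableOn (fun t : ℝ => v (p + t • d)) (Iic b) := by
    rw [← Iic_union_Icc_eq_Iic hb.le]
    exact (integrableOn_apply_add_smul hS hd hvc hbd (interior_subset hp)).union
      (hvc.comp hline.continuousOn hbS).integrableOn_Icc
  have hcont : ContinuousAt (fun t : ℝ => v (p + t • d)) 0 :=
    ContinuousAt.comp (by simpa using hvc.continuousAt (mem_interior_iff_mem_nhds.1 hp))
      hline.continuousAt
  -- Along the characteristic line, `rayIntegral v d` is a primitive of `v`.
  have hchain : HasDerivAt (fun τ : ℝ => rayIntegral v d (p + τ • d))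
      (fderiv ℂ (rayIntegral v d) p d) 0 := by
    have hu := (hasFDerivAt_rayIntegral hS hd hvc hvd hbd hp).differentiableAt.hasFDerivAt
    have hl : HasDerivAt (fun τ : ℝ => p + τ • d) d 0 := by
      simpa using ((hasDerivAt_id (0 : ℝ)).smul_const d).const_add p
    exact (hu.restrictScalars ℝ).comp_hasDerivAt_of_eq 0 hl (by simp)
  simp_rw [rayIntegral_add_smul] at hchain
  simpa using hchain.unique (hasDerivAt_integral_Iic hb hint hcont)

end RayIntegral

theorem backwardInvariant_semiStrip_prod_tStrip {n : ℕ} {lam : ℝ} (hlam : 0 ≤ lam)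
    (ω : Fin n → ℝ) (T ρ σ : ℝ) :
    BackwardInvariant (SemiStrip T ρ ×ˢ TStrip n σ) ((lam : ℂ), fun j => (ω j : ℂ)) := by
  rintro p ⟨⟨hre, him⟩, hφ⟩ t ht
  refine ⟨⟨?_, by simpa using him⟩, fun j => by simpa using hφ j⟩
  simp only [Prod.fst_add, Prod.smul_fst, add_re, smul_re, ofReal_re, smul_eq_mul]
  nlinarith

theorem characteristic_eq_add_smul {n : ℕ} (lam : ℝ) (ω : Fin n → ℝ) (p : ℂ × (Fin n → ℂ))
    (t : ℝ) :
    ((p.1 + ((lam * t : ℝ) : ℂ), fun j => p.2 j + ((t * ω j : ℝ) : ℂ)) : ℂ × (Fin n → ℂ))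
      = p + t • ((lam : ℂ), fun j => (ω j : ℂ)) := by
  ext <;> simp [mul_comm]

theorem characteristics_solution_general (n : ℕ) (lam : ℝ) (hlam : 0 < lam)
    (ω : Fin n → ℝ) (T ρ σ K : ℝ)
    (v : ℂ × (Fin n → ℂ) → ℂ)
    (hvc : ContinuousOn v (SemiStrip T ρ ×ˢ TStrip n σ))
    (hvd : DifferentiableOn ℂ v (interior (SemiStrip T ρ ×ˢ TStrip n σ)))
    (hbd : ∀ p ∈ SemiStrip T ρ ×ˢ TStrip n σ, ‖v p‖ ≤ K * Real.exp p.1.re) :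
    (∀ p ∈ SemiStrip T ρ ×ˢ TStrip n σ,
      IntegrableOn
        (fun t : ℝ => v (p.1 + ((lam * t : ℝ) : ℂ), fun j => p.2 j + ((t * ω j : ℝ) : ℂ)))
        (Set.Iic (0 : ℝ))) ∧
    DifferentiableOn ℂ
      (fun p : ℂ × (Fin n → ℂ) =>
        ∫ t in Set.Iic (0 : ℝ),
          v (p.1 + ((lam * t : ℝ) : ℂ), fun j => p.2 j + ((t * ω j : ℝ) : ℂ)))
      (interior (SemiStrip T ρ ×ˢ TStrip n σ)) ∧
    (∀ p ∈ interior (SemiStrip T ρ ×ˢ TStrip n σ),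
      fderiv ℂ
        (fun p : ℂ × (Fin n → ℂ) =>
          ∫ t in Set.Iic (0 : ℝ),
            v (p.1 + ((lam * t : ℝ) : ℂ), fun j => p.2 j + ((t * ω j : ℝ) : ℂ))) p
        ((lam : ℂ), fun j => (ω j : ℂ)) = v p) ∧
    (∀ p ∈ SemiStrip T ρ ×ˢ TStrip n σ,
      ‖∫ t in Set.Iic (0 : ℝ),
          v (p.1 + ((lam * t : ℝ) : ℂ), fun j => p.2 j + ((t * ω j : ℝ) : ℂ))‖
        ≤ lam⁻¹ * K * Real.exp p.1.re) := by
  simp_rw [characteristic_eq_add_smul]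
  have hS := backwardInvariant_semiStrip_prod_tStrip hlam.le ω T ρ σ
  have hd : 0 < ((lam : ℂ), fun j => (ω j : ℂ)).1.re := by simpa using hlam
  refine ⟨fun p hp => integrableOn_apply_add_smul hS hd hvc hbd hp,
    fun p hp =>
      (hasFDerivAt_rayIntegral hS hd hvc hvd hbd hp).differentiableAt.differentiableWithinAt,
    fun p hp => fderiv_rayIntegral_apply_self hS hd hvc hvd hbd hp,
    fun p hp => (norm_rayIntegral_le hS hd hbd hp).trans_eq (by simp)⟩

/-- The method-of-characteristics solution of `λ ∂u/∂s + D_ω u = v` on a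
semi-infinite strip, for an exponentially decaying right-hand side: the integral
`u(s,φ) = ∫_{−∞}^0 v(s + λt, φ + ωt) dt` converges absolutely, is holomorphic in
the interior, solves the PDE there, and satisfies `|u| ≤ λ⁻¹ K e^{Re s}`. -/
theorem characteristics_solution (n : ℕ) (hn : 1 ≤ n) (lam : ℝ) (hlam : 0 < lam)
    (ω : Fin n → ℝ) (T ρ σ K : ℝ) (hρ : 0 < ρ) (hσ : 0 < σ) (hK : 0 < K)
    (v : ℂ × (Fin n → ℂ) → ℂ)
    (hvc : ContinuousOn v (SemiStrip T ρ ×ˢ TStrip n σ))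
    (hvd : DifferentiableOn ℂ v (interior (SemiStrip T ρ ×ˢ TStrip n σ)))
    (hper : ∀ p ∈ SemiStrip T ρ ×ˢ TStrip n σ, ∀ j,
      v (p.1, Function.update p.2 j (p.2 j + 2 * Real.pi)) = v p)
    (hbd : ∀ p ∈ SemiStrip T ρ ×ˢ TStrip n σ, ‖v p‖ ≤ K * Real.exp p.1.re) :
    (∀ p ∈ SemiStrip T ρ ×ˢ TStrip n σ,
      IntegrableOn
        (fun t : ℝ => v (p.1 + ((lam * t : ℝ) : ℂ), fun j => p.2 j + ((t * ω j : ℝ) : ℂ)))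
        (Set.Iic (0 : ℝ))) ∧
    DifferentiableOn ℂ
      (fun p : ℂ × (Fin n → ℂ) =>
        ∫ t in Set.Iic (0 : ℝ),
          v (p.1 + ((lam * t : ℝ) : ℂ), fun j => p.2 j + ((t * ω j : ℝ) : ℂ)))
      (interior (SemiStrip T ρ ×ˢ TStrip n σ)) ∧
    (∀ p ∈ interior (SemiStrip T ρ ×ˢ TStrip n σ),
      fderiv ℂ
        (fun p : ℂ × (Fin n → ℂ) =>
          ∫ t in Set.Iic (0 : ℝ),
            v (p.1 + ((lam * t : ℝ) : ℂ), fun j => p.2 j + ((t * ω j : ℝ) : ℂ))) p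
        ((lam : ℂ), fun j => (ω j : ℂ)) = v p) ∧
    (∀ p ∈ SemiStrip T ρ ×ˢ TStrip n σ,
      ‖∫ t in Set.Iic (0 : ℝ),
          v (p.1 + ((lam * t : ℝ) : ℂ), fun j => p.2 j + ((t * ω j : ℝ) : ℂ))‖
        ≤ lam⁻¹ * K * Real.exp p.1.re) :=
  characteristics_solution_general n lam hlam ω T ρ σ K v hvc hvd hbd
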